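/- Let R be a supercommutative superring that is a Noetherian superring, a superdomain, and a unique factorization superring (UFSR). Then R is local with unique maximal ideal the canonical superideal 𝒥 (for every x : R, IsUnit x ↔ x ∉ 𝒥), and 𝒥 is nilpotent: there exists m : ℕ such that every product of m elements of 𝒥 is zero. (Corollary 3.7 of the paper.) -/

import Mathlib

/-! Basic notions for supercommutative superrings, following the paper
"A note on unique factorization in superrings". -/

section Defs

variable {R : Type*} [Ring R]

/-- `a` divides `b`: `b = c * a * d` for some `c, d`. -/
def SDvd (a b : R) : Prop := ∃ c d : R, b = c * a * d

/-- `a` is associated to `b`: `a = u * b * v` for units `u, v`. -/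
def SAssociated (a b : R) : Prop := ∃ u v : Rˣ, a = (u : R) * b * (v : R)

/-- `a` is normal: `aR = Ra` as sets. -/
def SNormal (a : R) : Prop :=
  {x : R | ∃ r : R, x = a * r} = {x : R | ∃ r : R, x = r * a}

/-- `a` is irreducible: a non-unit which is not a product of two non-units. -/
def SIrreducible (a : R) : Prop :=
  ¬ IsUnit a ∧ ∀ b c : R, a = b * c → IsUnit b ∨ IsUnit c

/-- `R` is a unique factorization superring: every nonzero non-unit admits a
factorization into normal irreducible elements, uniquely up to order and associates. -/
def IsUFSR (R : Type*) [Ring R] : Prop :=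
  (∀ x : R, x ≠ 0 → ¬ IsUnit x →
      ∃ (d : ℕ) (f : Fin d → R),
        (∀ i, SNormal (f i) ∧ SIrreducible (f i)) ∧ x = (List.ofFn f).prod) ∧
  (∀ x : R, x ≠ 0 → ¬ IsUnit x →
      ∀ (d n : ℕ) (f : Fin d → R) (g : Fin n → R),
        (∀ i, SNormal (f i) ∧ SIrreducible (f i)) →
        (∀ i, SNormal (g i) ∧ SIrreducible (g i)) →
        x = (List.ofFn f).prod → x = (List.ofFn g).prod →
        ∃ h : d = n, ∃ σ : Equiv.Perm (Fin n),
          ∀ i : Fin n, SAssociated (f (Fin.cast h.symm i)) (g (σ i)))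

end Defs

/-- The supercommutativity condition for a `ℤ₂`-grading `𝒜` on `R`. -/
def SuperComm {R : Type*} [Ring R] (𝒜 : ZMod 2 → AddSubgroup R) : Prop :=
  ∀ (i j : ZMod 2), ∀ x ∈ 𝒜 i, ∀ y ∈ 𝒜 j,
    x * y = ((-1 : ℤ) ^ (i.val * j.val)) • (y * x)

/-- `2` is a non-zerodivisor in `R`. -/
def TwoRegular (R : Type*) [Ring R] : Prop := ∀ x : R, 2 * x = 0 → x = 0

/-- The canonical superideal `𝒥 = R·R₁`, the (two-sided, by supercommutativity)
ideal generated by the odd part. -/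
def canonicalSuperideal {R : Type*} [Ring R] (𝒜 : ZMod 2 → AddSubgroup R) : Ideal R :=
  Ideal.span (𝒜 1 : Set R)

/-- `R` is a superdomain: `𝒥` is a proper completely prime ideal. -/
def IsSuperdomain {R : Type*} [Ring R] (𝒜 : ZMod 2 → AddSubgroup R) : Prop :=
  (1 : R) ∉ canonicalSuperideal 𝒜 ∧
    ∀ a b : R, a * b ∈ canonicalSuperideal 𝒜 →
      a ∈ canonicalSuperideal 𝒜 ∨ b ∈ canonicalSuperideal 𝒜

/-- `R` is oddly-Noetherian: the odd part `𝒜 1` is finitely generated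
over the even part `𝒜 0`. -/
def IsOddlyNoetherian {R : Type*} [Ring R] (𝒜 : ZMod 2 → AddSubgroup R) : Prop :=
  ∃ (n : ℕ) (z : Fin n → R), (∀ j, z j ∈ 𝒜 1) ∧
    ∀ x ∈ 𝒜 1, ∃ a : Fin n → R, (∀ j, a j ∈ 𝒜 0) ∧ x = ∑ j, a j * z j

/-- The even subring `R₀` of `R`, with carrier `𝒜 0`. -/
def evenSubring {R : Type*} [Ring R] (𝒜 : ZMod 2 → AddSubgroup R) [GradedRing 𝒜] :
    Subring R where
  carrier := 𝒜 0
  mul_mem' := fun {a b} ha hb => by simpa using SetLike.mul_mem_graded ha hb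
  one_mem' := SetLike.one_mem_graded 𝒜
  add_mem' := fun {a b} ha hb => (𝒜 0).add_mem ha hb
  zero_mem' := (𝒜 0).zero_mem
  neg_mem' := fun {a} ha => (𝒜 0).neg_mem ha

section Aux1
variable {R : Type*} [Ring R] (𝒜 : ZMod 2 → AddSubgroup R)

/-- decomposition into even and odd parts -/
lemma sc_decomp [GradedRing 𝒜] (s : R) : ∃ s0 ∈ 𝒜 0, ∃ s1 ∈ 𝒜 1, s = s0 + s1 := by
  classical
  have h := DirectSum.sum_support_decompose 𝒜 s
  refine ⟨(DirectSum.decompose 𝒜 s 0 : R), SetLike.coe_mem _,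
    (DirectSum.decompose 𝒜 s 1 : R), SetLike.coe_mem _, ?_⟩
  have huniv : ∑ i : ZMod 2, ((DirectSum.decompose 𝒜 s i : 𝒜 i) : R) = s := by
    have hss : ∑ i ∈ (DirectSum.decompose 𝒜 s).support, ((DirectSum.decompose 𝒜 s i : 𝒜 i) : R)
        = ∑ i : ZMod 2, ((DirectSum.decompose 𝒜 s i : 𝒜 i) : R) := by
      refine Finset.sum_subset (Finset.subset_univ _) ?_
      intro i _ hi
      rw [DFinsupp.notMem_support_iff.mp hi, ZeroMemClass.coe_zero]
    rw [← hss]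
    exact h
  have hpair : (Finset.univ : Finset (ZMod 2)) = {0, 1} := by decide
  rw [hpair, Finset.sum_insert (by decide), Finset.sum_singleton] at huniv
  exact huniv.symm

variable {𝒜}

lemma even_comm (hsc : SuperComm 𝒜) [GradedRing 𝒜] {e : R} (he : e ∈ 𝒜 0) (s : R) :
    e * s = s * e := by
  obtain ⟨s0, hs0, s1, hs1, rfl⟩ := sc_decomp 𝒜 s
  have h0 := hsc 0 0 e he s0 hs0
  have h1 := hsc 0 1 e he s1 hs1
  have e0 : ((0 : ZMod 2).val * (0 : ZMod 2).val) = 0 := by decide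
  have e1 : ((0 : ZMod 2).val * (1 : ZMod 2).val) = 0 := by decide
  rw [e0, pow_zero, one_smul] at h0
  rw [e1, pow_zero, one_smul] at h1
  rw [mul_add, add_mul, h0, h1]

lemma odd_anticomm (hsc : SuperComm 𝒜) {a b : R} (ha : a ∈ 𝒜 1) (hb : b ∈ 𝒜 1) :
    a * b = -(b * a) := by
  have h := hsc 1 1 a ha b hb
  have e1 : ((1 : ZMod 2).val * (1 : ZMod 2).val) = 1 := by decide
  rwa [e1, pow_one, neg_one_zsmul] at h

lemma odd_sq (hsc : SuperComm 𝒜) (h2 : TwoRegular R) {a : R} (ha : a ∈ 𝒜 1) :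
    a * a = 0 := by
  have h := odd_anticomm hsc ha ha
  exact h2 _ (by rw [two_mul]; exact add_eq_zero_iff_eq_neg.mpr h)

lemma odd_move (hsc : SuperComm 𝒜) [GradedRing 𝒜] {zo : R} (hzo : zo ∈ 𝒜 1) (s : R) :
    ∃ s', zo * s = s' * zo := by
  obtain ⟨s0, hs0, s1, hs1, rfl⟩ := sc_decomp 𝒜 s
  refine ⟨s0 - s1, ?_⟩
  rw [mul_add, sub_mul, (even_comm hsc hs0 zo).symm, odd_anticomm hsc hzo hs1]
  abel

lemma oddList_move (hsc : SuperComm 𝒜) [GradedRing 𝒜] :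
    ∀ (l : List R), (∀ y ∈ l, y ∈ 𝒜 1) → ∀ s : R, ∃ s', l.prod * s = s' * l.prod := by
  intro l
  induction l with
  | nil => intro _ s; exact ⟨s, by simp⟩
  | cons a t ih =>
    intro h s
    obtain ⟨s1, hs1⟩ := ih (fun y hy => h y (List.mem_cons_of_mem a hy)) s
    obtain ⟨s2, hs2⟩ := odd_move hsc (h a List.mem_cons_self) s1
    refine ⟨s2, ?_⟩
    rw [List.prod_cons, mul_assoc, hs1, ← mul_assoc, hs2, mul_assoc]

lemma oddList_comm_or (hsc : SuperComm 𝒜) {zo : R} (hzo : zo ∈ 𝒜 1) :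
    ∀ (l : List R), (∀ y ∈ l, y ∈ 𝒜 1) →
      zo * l.prod = l.prod * zo ∨ zo * l.prod = -(l.prod * zo) := by
  intro l
  induction l with
  | nil => intro _; left; simp
  | cons a t ih =>
    intro h
    have ha : zo * a = -(a * zo) := odd_anticomm hsc hzo (h a List.mem_cons_self)
    rcases ih (fun y hy => h y (List.mem_cons_of_mem a hy)) with h' | h'
    · right
      rw [List.prod_cons, ← mul_assoc, ha, neg_mul, mul_assoc, h', ← mul_assoc, mul_assoc]
    · left
      rw [List.prod_cons, ← mul_assoc, ha, neg_mul, mul_assoc, h', mul_neg, neg_neg, mul_assoc]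

lemma oddList_dup_zero (hsc : SuperComm 𝒜) (h2 : TwoRegular R)
    (A B C : List R) {a : R} (ha : a ∈ 𝒜 1) (hB : ∀ y ∈ B, y ∈ 𝒜 1) :
    (A ++ a :: (B ++ a :: C)).prod = 0 := by
  have hsq : a * a = 0 := odd_sq hsc h2 ha
  have key : a * (B.prod * (a * C.prod)) = 0 := by
    rcases oddList_comm_or hsc ha B hB with h | h
    · calc a * (B.prod * (a * C.prod)) = (a * B.prod) * (a * C.prod) := by rw [mul_assoc]
        _ = B.prod * (a * a) * C.prod := by rw [h, mul_assoc, mul_assoc, ← mul_assoc a a]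
        _ = 0 := by rw [hsq, mul_zero, zero_mul]
    · calc a * (B.prod * (a * C.prod)) = (a * B.prod) * (a * C.prod) := by rw [mul_assoc]
        _ = -(B.prod * (a * a) * C.prod) := by
            rw [h, neg_mul, mul_assoc, mul_assoc, ← mul_assoc a a]
        _ = 0 := by rw [hsq, mul_zero, zero_mul, neg_zero]
  rw [List.prod_append, List.prod_cons, List.prod_append, List.prod_cons, key, mul_zero]

lemma list_dup_decomp {α : Type*} :
    ∀ {l : List α}, ¬ l.Nodup → ∃ l₁ a l₂ l₃, l = l₁ ++ a :: (l₂ ++ a :: l₃) := by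
  intro l
  induction l with
  | nil => intro h; exact absurd List.nodup_nil h
  | cons b t ih =>
    intro h
    rw [List.nodup_cons] at h
    rcases not_and_or.mp h with hb | ht
    · obtain ⟨s, u, rfl⟩ := List.append_of_mem (not_not.mp hb)
      exact ⟨[], b, s, u, rfl⟩
    · obtain ⟨l₁, a, l₂, l₃, rfl⟩ := ih ht
      exact ⟨b :: l₁, a, l₂, l₃, rfl⟩

end Aux1

section Aux2
variable {R : Type*} [Ring R] {𝒜 : ZMod 2 → AddSubgroup R}

local notation "𝒥" => canonicalSuperideal 𝒜

lemma J_mul_right (hsc : SuperComm 𝒜) [GradedRing 𝒜] {a : R} (ha : a ∈ 𝒥) (r : R) :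
    a * r ∈ 𝒥 := by
  refine Submodule.span_induction (p := fun x _ => x * r ∈ 𝒥) ?_ ?_ ?_ ?_ ha
  · intro x hx
    obtain ⟨s', hs'⟩ := odd_move hsc hx r
    rw [hs', ← smul_eq_mul]
    exact Submodule.smul_mem _ _ (Ideal.subset_span hx)
  · simp
  · intro x y _ _ hx hy
    rw [add_mul]; exact Submodule.add_mem _ hx hy
  · intro c x _ hx
    rw [smul_eq_mul, mul_assoc, ← smul_eq_mul]
    exact Submodule.smul_mem _ _ hx

lemma not_unit_mem_J (hdom1 : (1 : R) ∉ 𝒥) {x : R} (hx : x ∈ 𝒥) : ¬ IsUnit x := by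
  rintro ⟨w, rfl⟩
  refine hdom1 ?_
  have := Submodule.smul_mem 𝒥 ((w⁻¹ : Rˣ) : R) hx
  rwa [smul_eq_mul, Units.inv_mul] at this

lemma assoc_mem_J (hsc : SuperComm 𝒜) [GradedRing 𝒜] {a b : R} (h : SAssociated a b) :
    a ∈ 𝒥 ↔ b ∈ 𝒥 := by
  obtain ⟨u, v, rfl⟩ := h
  constructor
  · intro ha
    have hb : (b : R) = (u⁻¹ : Rˣ) * ((u : R) * b * v) * (v⁻¹ : Rˣ) := by
      simp [mul_assoc]
    rw [hb]
    exact J_mul_right hsc (by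
      rw [← smul_eq_mul]; exact Submodule.smul_mem _ _ ha) _
  · intro hb
    have : ((u : Rˣ) : R) * (b * v) ∈ 𝒥 := by
      rw [← smul_eq_mul]
      exact Submodule.smul_mem _ _ (J_mul_right hsc hb ((v : Rˣ) : R))
    rwa [← mul_assoc] at this

end Aux2

section Aux3
variable {R : Type*} [Ring R] {𝒜 : ZMod 2 → AddSubgroup R}

local notation "𝒥" => canonicalSuperideal 𝒜

/-- span of products of `k` of the odd generators -/
def zspan {n : ℕ} (z : Fin n → R) (k : ℕ) : Submodule R R :=
  Submodule.span R {w : R | ∃ l : List (Fin n), l.length = k ∧ w = (l.map z).prod}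

lemma mem_zspan_zero {n : ℕ} (z : Fin n → R) (x : R) : x ∈ zspan z 0 := by
  have h1 : (1 : R) ∈ {w : R | ∃ l : List (Fin n), l.length = 0 ∧ w = (l.map z).prod} :=
    ⟨[], rfl, by simp⟩
  have := Submodule.smul_mem (zspan z 0) x (Submodule.subset_span h1)
  rwa [smul_eq_mul, mul_one] at this

lemma J_le_zspan_one {n : ℕ} {z : Fin n → R}
    (hgen : ∀ x ∈ 𝒜 1, ∃ a : Fin n → R, (∀ j, a j ∈ 𝒜 0) ∧ x = ∑ j, a j * z j) :
    𝒥 ≤ zspan z 1 := by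
  refine Ideal.span_le.mpr ?_
  intro y hy
  obtain ⟨a, _, hy⟩ := hgen y hy
  rw [hy]
  refine Submodule.sum_mem _ (fun j _ => ?_)
  rw [← smul_eq_mul]
  exact Submodule.smul_mem _ _ (Submodule.subset_span ⟨[j], rfl, by simp⟩)

lemma zspan_mul (hsc : SuperComm 𝒜) [GradedRing 𝒜] {n : ℕ} {z : Fin n → R}
    (hz : ∀ j, z j ∈ 𝒜 1) {p q : ℕ} {x y : R}
    (hx : x ∈ zspan z p) (hy : y ∈ zspan z q) : x * y ∈ zspan z (p + q) := by
  refine Submodule.span_induction (p := fun x _ => x * y ∈ zspan z (p + q)) ?_ ?_ ?_ ?_ hx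
  · rintro w ⟨l, hl, rfl⟩
    have hodd : ∀ y' ∈ l.map z, y' ∈ 𝒜 1 := by
      intro y' hy'
      obtain ⟨j, _, rfl⟩ := List.mem_map.mp hy'
      exact hz j
    refine Submodule.span_induction
      (p := fun y _ => (l.map z).prod * y ∈ zspan z (p + q)) ?_ ?_ ?_ ?_ hy
    · rintro w' ⟨l', hl', rfl⟩
      refine Submodule.subset_span ⟨l ++ l', by simp [hl, hl'], ?_⟩
      rw [List.map_append, List.prod_append]
    · simp
    · intro a b _ _ hA hB
      rw [mul_add]; exact Submodule.add_mem _ hA hB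
    · intro c y' _ hy'
      obtain ⟨c', hc'⟩ := oddList_move hsc (l.map z) hodd c
      rw [smul_eq_mul, ← mul_assoc, hc', mul_assoc, ← smul_eq_mul]
      exact Submodule.smul_mem _ _ hy'
  · simp
  · intro a b _ _ hA hB
    rw [add_mul]; exact Submodule.add_mem _ hA hB
  · intro c x' _ hx'
    rw [smul_eq_mul, mul_assoc, ← smul_eq_mul]
    exact Submodule.smul_mem _ _ hx'

lemma zspan_big_zero (hsc : SuperComm 𝒜) (h2 : TwoRegular R) {n : ℕ} {z : Fin n → R}
    (hz : ∀ j, z j ∈ 𝒜 1) {k : ℕ} (hk : n < k) {x : R} (hx : x ∈ zspan z k) : x = 0 := by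
  have hle : zspan z k ≤ ⊥ := by
    refine Submodule.span_le.mpr ?_
    rintro w ⟨l, hl, rfl⟩
    have hnd : ¬ l.Nodup := by
      intro hnd
      have := hnd.length_le_card
      simp only [Fintype.card_fin] at this
      omega
    obtain ⟨l₁, a, l₂, l₃, rfl⟩ := list_dup_decomp hnd
    have hmap : ((l₁ ++ a :: (l₂ ++ a :: l₃)).map z)
        = (l₁.map z) ++ (z a) :: ((l₂.map z) ++ (z a) :: (l₃.map z)) := by
      simp
    show (List.map z (l₁ ++ a :: (l₂ ++ a :: l₃))).prod ∈ (⊥ : Submodule R R)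
    rw [Submodule.mem_bot, hmap]
    exact oddList_dup_zero hsc h2 _ _ _ (hz a) (by
      intro y hy
      obtain ⟨j, _, rfl⟩ := List.mem_map.mp hy
      exact hz j)
  exact Submodule.mem_bot R |>.mp (hle hx)

open Classical in
/-- number of factors lying in the canonical superideal -/
noncomputable def Jcnt (𝒜 : ZMod 2 → AddSubgroup R) {m : ℕ} (F : Fin m → R) : ℕ :=
  ∑ i, if F i ∈ canonicalSuperideal 𝒜 then 1 else 0

lemma prod_ofFn_mem_zspan (hsc : SuperComm 𝒜) [GradedRing 𝒜] {n : ℕ} {z : Fin n → R}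
    (hz : ∀ j, z j ∈ 𝒜 1)
    (hgen : ∀ x ∈ 𝒜 1, ∃ a : Fin n → R, (∀ j, a j ∈ 𝒜 0) ∧ x = ∑ j, a j * z j) :
    ∀ {m : ℕ} (F : Fin m → R), (List.ofFn F).prod ∈ zspan z (Jcnt 𝒜 F) := by
  intro m
  induction m with
  | zero =>
    intro F
    exact mem_zspan_zero z _
  | succ m ih =>
    intro F
    classical
    have hc : Jcnt 𝒜 F
        = (if F 0 ∈ 𝒥 then 1 else 0) + Jcnt 𝒜 (fun i : Fin m => F i.succ) :=
      Fin.sum_univ_succ _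
    rw [List.ofFn_succ, List.prod_cons]
    by_cases h0 : F 0 ∈ 𝒥
    · rw [hc, if_pos h0]
      exact zspan_mul hsc hz (J_le_zspan_one hgen h0) (ih _)
    · rw [hc, if_neg h0, zero_add, ← smul_eq_mul]
      exact Submodule.smul_mem _ _ (ih _)

lemma Jprod_zero (hsc : SuperComm 𝒜) (h2 : TwoRegular R) [GradedRing 𝒜] {n : ℕ}
    {z : Fin n → R} (hz : ∀ j, z j ∈ 𝒜 1)
    (hgen : ∀ x ∈ 𝒜 1, ∃ a : Fin n → R, (∀ j, a j ∈ 𝒜 0) ∧ x = ∑ j, a j * z j)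
    {m : ℕ} (hm : n < m) (F : Fin m → R) (hF : ∀ i, F i ∈ 𝒥) :
    (List.ofFn F).prod = 0 := by
  have hc : Jcnt 𝒜 F = m := by
    unfold Jcnt
    rw [Finset.sum_congr rfl (fun i _ => if_pos (hF i))]
    simp
  have := prod_ofFn_mem_zspan hsc hz hgen F
  rw [hc] at this
  exact zspan_big_zero hsc h2 hz hm this

end Aux3

section Machine
variable {R : Type*} [Ring R] {𝒜 : ZMod 2 → AddSubgroup R}

local notation "𝒥" => canonicalSuperideal 𝒜

/-- a product of a list with an entry in `𝒥` lies in `𝒥` -/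
lemma prod_mem_J_of_entry (hsc : SuperComm 𝒜) [GradedRing 𝒜] :
    ∀ (l : List R), (∃ y ∈ l, y ∈ 𝒥) → l.prod ∈ 𝒥 := by
  intro l
  induction l with
  | nil => rintro ⟨y, hy, _⟩; exact absurd hy List.not_mem_nil
  | cons a t ih =>
    rintro ⟨y, hy, hyJ⟩
    rw [List.prod_cons]
    rcases List.mem_cons.mp hy with rfl | hyt
    · exact J_mul_right hsc hyJ _
    · rw [← smul_eq_mul]
      exact Submodule.smul_mem _ _ (ih ⟨y, hyt, hyJ⟩)

lemma exists_entry_mem_J (hdom : IsSuperdomain 𝒜) :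
    ∀ (l : List R), l.prod ∈ 𝒥 → ∃ y ∈ l, y ∈ 𝒥 := by
  intro l
  induction l with
  | nil => intro h; exact absurd h (by simpa using hdom.1)
  | cons a t ih =>
    intro h
    rw [List.prod_cons] at h
    rcases hdom.2 a t.prod h with ha | ht
    · exact ⟨a, List.mem_cons_self, ha⟩
    · obtain ⟨y, hy, hyJ⟩ := ih ht
      exact ⟨y, List.mem_cons_of_mem a hy, hyJ⟩

lemma isUnit_of_sq {a : R} (h : IsUnit (a * a)) : IsUnit a := by
  obtain ⟨b, hb1, hb2⟩ := isUnit_iff_exists.mp h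
  have h1 : a * (a * b) = 1 := by rw [← mul_assoc]; exact hb1
  have h2 : (b * a) * a = 1 := by rw [mul_assoc]; exact hb2
  have h3 : (b * a) * (a * (a * b)) = a * b := by
    rw [← mul_assoc (b * a) a, h2, one_mul]
  have h4 : (b * a) * (a * (a * b)) = b * a := by rw [h1, mul_one]
  have heq : b * a = a * b := h4.symm.trans h3
  exact ⟨⟨a, a * b, h1, by rw [← heq]; exact h2⟩, rfl⟩

theorem no_normal_irreducible_outside_J (hsc : SuperComm 𝒜) (h2 : TwoRegular R)
    [GradedRing 𝒜] (hdom : IsSuperdomain 𝒜) (hufsr : IsUFSR R)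
    {n : ℕ} {z : Fin n → R} (hz : ∀ j, z j ∈ 𝒜 1)
    (hgen : ∀ x ∈ 𝒜 1, ∃ a : Fin n → R, (∀ j, a j ∈ 𝒜 0) ∧ x = ∑ j, a j * z j)
    (hodd : 𝒜 1 ≠ ⊥)
    {f : R} (hfn : SNormal f) (hfi : SIrreducible f) (hfJ : f ∉ 𝒥) : False := by
  classical
  have hfu : ¬ IsUnit f := hfi.1
  -- a nonzero odd element
  obtain ⟨θ, hθ1, hθ0⟩ : ∃ θ ∈ 𝒜 1, θ ≠ 0 := by
    by_contra h
    push_neg at h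
    exact hodd (AddSubgroup.eq_bot_iff_forall _ |>.mpr h)
  have hθJ : θ ∈ 𝒥 := Ideal.subset_span hθ1
  -- the set of 𝒥-factor counts of factorizations of nonzero elements of 𝒥
  set C : Set ℕ := {c | ∃ (x : R) (d : ℕ) (F : Fin d → R), x ∈ 𝒥 ∧ x ≠ 0 ∧
    (∀ i, SNormal (F i) ∧ SIrreducible (F i)) ∧ x = (List.ofFn F).prod ∧
    Jcnt 𝒜 F = c} with hC
  have hCne : C.Nonempty := by
    obtain ⟨d, F, hF, hFp⟩ := hufsr.1 θ hθ0 (not_unit_mem_J hdom.1 hθJ)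
    exact ⟨Jcnt 𝒜 F, θ, d, F, hθJ, hθ0, hF, hFp, rfl⟩
  have hCbdd : ∀ c ∈ C, c ≤ n := by
    rintro c ⟨x, d, F, hxJ, hx0, hF, hFp, hcnt⟩
    by_contra hc
    push_neg at hc
    exact hx0 (hFp.trans (zspan_big_zero hsc h2 hz (hcnt ▸ hc)
      (prod_ofFn_mem_zspan hsc hz hgen F)))
  set cmax := sSup C with hcmax
  have hmem : cmax ∈ C := Nat.sSup_mem hCne ⟨n, fun c hc => hCbdd c hc⟩
  have hle : ∀ c ∈ C, c ≤ cmax := fun c hc => le_csSup ⟨n, fun c' hc' => hCbdd c' hc'⟩ hc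
  -- descent
  suffices H : ∀ L : ℕ, ∀ (t : R) (F : Fin L → R), t ∈ 𝒥 → t ≠ 0 →
      (∀ i, SNormal (F i) ∧ SIrreducible (F i)) → t = (List.ofFn F).prod →
      Jcnt 𝒜 F = cmax → False by
    obtain ⟨x, d, F, hxJ, hx0, hF, hFp, hcnt⟩ := hmem
    exact H d x F hxJ hx0 hF hFp hcnt
  intro L
  induction L using Nat.strong_induction_on with
  | _ L IH =>
  intro t F htJ ht0 hFni hFprod hFcnt
  -- t annihilates 𝒥 on both sides
  have hcnt_pos : ∀ {e : ℕ} (G : Fin e → R), (∀ i, SNormal (G i) ∧ SIrreducible (G i)) →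
      (List.ofFn G).prod ∈ 𝒥 → 1 ≤ Jcnt 𝒜 G := by
    intro e G hG hGJ
    obtain ⟨y, hy, hyJ⟩ := exists_entry_mem_J hdom _ hGJ
    obtain ⟨i, rfl⟩ := List.mem_ofFn.mp hy
    calc 1 = (if G i ∈ 𝒥 then 1 else 0) := (if_pos hyJ).symm
      _ ≤ Jcnt 𝒜 G := Finset.single_le_sum (f := fun i => if G i ∈ 𝒥 then 1 else 0)
          (fun _ _ => Nat.zero_le _) (Finset.mem_univ i)
  have happ : ∀ {e : ℕ} (G : Fin e → R), (∀ i, SNormal (G i) ∧ SIrreducible (G i)) →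
      ∀ i, SNormal (Fin.append F G i) ∧ SIrreducible (Fin.append F G i) := by
    intro e G hG i
    refine Fin.addCases (fun j => ?_) (fun j => ?_) i
    · rw [Fin.append_left]; exact hFni j
    · rw [Fin.append_right]; exact hG j
  have happ' : ∀ {e : ℕ} (G : Fin e → R), (∀ i, SNormal (G i) ∧ SIrreducible (G i)) →
      ∀ i, SNormal (Fin.append G F i) ∧ SIrreducible (Fin.append G F i) := by
    intro e G hG i
    refine Fin.addCases (fun j => ?_) (fun j => ?_) i
    · rw [Fin.append_left]; exact hG j
    · rw [Fin.append_right]; exact hFni j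
  have hcnt_app : ∀ {e : ℕ} (G : Fin e → R),
      Jcnt 𝒜 (Fin.append F G) = Jcnt 𝒜 F + Jcnt 𝒜 G := by
    intro e G
    unfold Jcnt
    rw [Fin.sum_univ_add]
    congr 1
    · exact Finset.sum_congr rfl (fun i _ => by rw [Fin.append_left])
    · exact Finset.sum_congr rfl (fun i _ => by rw [Fin.append_right])
  have hcnt_app' : ∀ {e : ℕ} (G : Fin e → R),
      Jcnt 𝒜 (Fin.append G F) = Jcnt 𝒜 G + Jcnt 𝒜 F := by
    intro e G
    unfold Jcnt
    rw [Fin.sum_univ_add]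
    congr 1
    · exact Finset.sum_congr rfl (fun i _ => by rw [Fin.append_left])
    · exact Finset.sum_congr rfl (fun i _ => by rw [Fin.append_right])
  have hannL : ∀ zz ∈ 𝒥, t * zz = 0 := by
    intro zz hzz
    by_contra hne0
    have hzz0 : zz ≠ 0 := fun h => hne0 (by rw [h, mul_zero])
    obtain ⟨e, G, hG, hGp⟩ := hufsr.1 zz hzz0 (not_unit_mem_J hdom.1 hzz)
    have htzJ : t * zz ∈ 𝒥 := J_mul_right hsc htJ zz
    have hprod : t * zz = (List.ofFn (Fin.append F G)).prod := by
      rw [List.ofFn_fin_append, List.prod_append, ← hFprod, ← hGp]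
    have hmemC : Jcnt 𝒜 (Fin.append F G) ∈ C :=
      ⟨t * zz, L + e, Fin.append F G, htzJ, hne0, happ G hG, hprod, rfl⟩
    have h1 : 1 ≤ Jcnt 𝒜 G := hcnt_pos G hG (hGp ▸ hzz)
    have := hle _ hmemC
    rw [hcnt_app G, hFcnt] at this
    omega
  have hannR : ∀ zz ∈ 𝒥, zz * t = 0 := by
    intro zz hzz
    by_contra hne0
    have hzz0 : zz ≠ 0 := fun h => hne0 (by rw [h, zero_mul])
    obtain ⟨e, G, hG, hGp⟩ := hufsr.1 zz hzz0 (not_unit_mem_J hdom.1 hzz)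
    have htzJ : zz * t ∈ 𝒥 := by
      rw [← smul_eq_mul]; exact Submodule.smul_mem _ _ htJ
    have hprod : zz * t = (List.ofFn (Fin.append G F)).prod := by
      rw [List.ofFn_fin_append, List.prod_append, ← hFprod, ← hGp]
    have hmemC : Jcnt 𝒜 (Fin.append G F) ∈ C :=
      ⟨zz * t, e + L, Fin.append G F, htzJ, hne0, happ' G hG, hprod, rfl⟩
    have h1 : 1 ≤ Jcnt 𝒜 G := hcnt_pos G hG (hGp ▸ hzz)
    have := hle _ hmemC
    rw [hcnt_app' G, hFcnt] at this
    omega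
  -- t is central
  have hcen : ∀ r : R, t * r = r * t := by
    intro r
    obtain ⟨r0, hr0, r1, hr1, rfl⟩ := sc_decomp 𝒜 r
    have h1 : t * r1 = 0 := hannL r1 (Ideal.subset_span hr1)
    have h1' : r1 * t = 0 := hannR r1 (Ideal.subset_span hr1)
    rw [mul_add, add_mul, h1, h1', ← even_comm hsc hr0 t]
  have ht2 : t * t = 0 := hannL t htJ
  -- f ± t facts
  have hnilt : IsNilpotent t := ⟨2, by rw [pow_two]; exact ht2⟩
  have hniltn : IsNilpotent (-t) := hnilt.neg
  have hftJ : f + t ∉ 𝒥 := fun h => hfJ (by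
    have := Submodule.sub_mem _ h htJ
    simpa using this)
  have hfmtJ : f - t ∉ 𝒥 := fun h => hfJ (by
    have := Submodule.add_mem _ h htJ
    simpa using this)
  have hft0 : f + t ≠ 0 := fun h => hftJ (h ▸ Submodule.zero_mem _)
  have hfmt0 : f - t ≠ 0 := fun h => hfmtJ (h ▸ Submodule.zero_mem _)
  have hftu : ¬ IsUnit (f + t) := by
    intro hu
    refine hfu ?_
    have hcom : Commute (-t) (f + t) := by
      show (-t) * (f + t) = (f + t) * (-t)
      rw [neg_mul, mul_neg, hcen (f + t)]
    have := hniltn.isUnit_add_right_of_commute hu hcom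
    rwa [show -t + (f + t) = f by abel] at this
  have hfmtu : ¬ IsUnit (f - t) := by
    intro hu
    refine hfu ?_
    have hcom : Commute t (f - t) := by
      show t * (f - t) = (f - t) * t
      rw [hcen (f - t)]
    have := hnilt.isUnit_add_right_of_commute hu hcom
    rwa [show t + (f - t) = f by abel] at this
  -- f * f
  have hff0 : f * f ≠ 0 := by
    intro h
    rcases hdom.2 f f (h ▸ Submodule.zero_mem _) with h' | h' <;> exact hfJ h'
  have hffu : ¬ IsUnit (f * f) := fun h => hfu (isUnit_of_sq h)
  have hffprod : f * f = (f + t) * (f - t) := by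
    have expand : (f + t) * (f - t) = f * f - f * t + (t * f - t * t) := by
      rw [add_mul, mul_sub, mul_sub]
    rw [expand, hcen f, ht2]
    abel
  -- factor f + t and f - t
  obtain ⟨e1, G1, hG1, hG1p⟩ := hufsr.1 (f + t) hft0 hftu
  obtain ⟨e2, G2, hG2, hG2p⟩ := hufsr.1 (f - t) hfmt0 hfmtu
  have he1 : e1 = 1 := by
    have h2' : 2 = e1 + e2 := by
      obtain ⟨h, _⟩ := hufsr.2 (f * f) hff0 hffu 2 (e1 + e2) (fun _ => f)
        (Fin.append G1 G2) (fun _ => ⟨hfn, hfi⟩)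
        (by
          intro i
          refine Fin.addCases (fun j => ?_) (fun j => ?_) i
          · rw [Fin.append_left]; exact hG1 j
          · rw [Fin.append_right]; exact hG2 j)
        (by simp) (by rw [List.ofFn_fin_append, List.prod_append, ← hG1p, ← hG2p, hffprod])
      exact h
    have he1' : e1 ≠ 0 := by
      intro h
      subst h
      refine hftu ?_
      rw [hG1p]
      simp
    have he2' : e2 ≠ 0 := by
      intro h
      subst h
      refine hfmtu ?_
      rw [hG2p]
      simp
    omega
  have he2 : e2 = 1 := by
    have h2' : 2 = e1 + e2 := by
      obtain ⟨h, _⟩ := hufsr.2 (f * f) hff0 hffu 2 (e1 + e2) (fun _ => f)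
        (Fin.append G1 G2) (fun _ => ⟨hfn, hfi⟩)
        (by
          intro i
          refine Fin.addCases (fun j => ?_) (fun j => ?_) i
          · rw [Fin.append_left]; exact hG1 j
          · rw [Fin.append_right]; exact hG2 j)
        (by simp) (by rw [List.ofFn_fin_append, List.prod_append, ← hG1p, ← hG2p, hffprod])
      exact h
    omega
  subst he1; subst he2
  -- f is associated to f + t
  obtain ⟨heq, σ, hmatch⟩ := hufsr.2 (f * f) hff0 hffu 2 (1 + 1) (fun _ => f)
    (Fin.append G1 G2) (fun _ => ⟨hfn, hfi⟩)
    (by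
      intro i
      refine Fin.addCases (fun j => ?_) (fun j => ?_) i
      · rw [Fin.append_left]; exact hG1 j
      · rw [Fin.append_right]; exact hG2 j)
    (by simp) (by rw [List.ofFn_fin_append, List.prod_append, ← hG1p, ← hG2p, hffprod])
  have hG10 : Fin.append G1 G2 (0 : Fin (1 + 1)) = f + t := by
    have h0 : (0 : Fin (1 + 1)) = Fin.castAdd 1 (0 : Fin 1) := rfl
    rw [h0, Fin.append_left]
    have := hG1p
    simp only [List.ofFn_succ, List.ofFn_zero, List.prod_cons, List.prod_nil, mul_one] at this
    exact this.symm
  have hA : SAssociated f (f + t) := by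
    have := hmatch (σ.symm 0)
    rwa [Equiv.apply_symm_apply, hG10] at this
  obtain ⟨u, v, huv⟩ := hA
  have h5 : ((u⁻¹ : Rˣ) : R) * f * ((v⁻¹ : Rˣ) : R) = f + t := by
    conv_lhs => rw [huv, mul_assoc ((u : R)) (f + t) ((v : R)), Units.inv_mul_cancel_left,
      Units.mul_inv_cancel_right]
  -- use normality
  have hmemn : f * ((v⁻¹ : Rˣ) : R) ∈ {x : R | ∃ r : R, x = f * r} := ⟨_, rfl⟩
  rw [hfn] at hmemn
  obtain ⟨v', hv'⟩ := hmemn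
  have ht_eq : t = (((u⁻¹ : Rˣ) : R) * v' - 1) * f := by
    have : (((u⁻¹ : Rˣ) : R) * v' - 1) * f = t := by
      calc (((u⁻¹ : Rˣ) : R) * v' - 1) * f
          = ((u⁻¹ : Rˣ) : R) * (v' * f) - f := by rw [sub_mul, one_mul, mul_assoc]
        _ = ((u⁻¹ : Rˣ) : R) * (f * ((v⁻¹ : Rˣ) : R)) - f := by rw [← hv']
        _ = (f + t) - f := by rw [← mul_assoc, h5]
        _ = t := by abel
    exact this.symm
  set j : R := ((u⁻¹ : Rˣ) : R) * v' - 1 with hj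
  have hjJ : j ∈ 𝒥 := by
    rcases hdom.2 j f (by rw [← ht_eq]; exact htJ) with h | h
    · exact h
    · exact absurd h hfJ
  have hj0 : j ≠ 0 := by
    intro h
    rw [h, zero_mul] at ht_eq
    exact ht0 ht_eq
  obtain ⟨lh, Hf, hHf, hHfp⟩ := hufsr.1 j hj0 (not_unit_mem_J hdom.1 hjJ)
  -- new factorization of t : Hf ++ [f]
  set F' : Fin (lh + 1) → R := Fin.append Hf (fun _ : Fin 1 => f) with hF'
  have hF'ni : ∀ i, SNormal (F' i) ∧ SIrreducible (F' i) := by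
    intro i
    refine Fin.addCases (fun j' => ?_) (fun j' => ?_) i
    · rw [hF', Fin.append_left]; exact hHf j'
    · rw [hF', Fin.append_right]; exact ⟨hfn, hfi⟩
  have hF'p : t = (List.ofFn F').prod := by
    rw [hF', List.ofFn_fin_append, List.prod_append, ← hHfp]
    simp [ht_eq]
  obtain ⟨hL, τ, hm2⟩ := hufsr.2 t ht0 (not_unit_mem_J hdom.1 htJ) L (lh + 1) F F'
    hFni hF'ni hFprod hF'p
  -- transfer the count
  have hcntF' : Jcnt 𝒜 F' = cmax := by
    have step1 : Jcnt 𝒜 F = ∑ i : Fin (lh + 1),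
        (if F (Fin.cast hL.symm i) ∈ 𝒥 then 1 else 0) := by
      unfold Jcnt
      exact (Fintype.sum_equiv (finCongr hL.symm)
        (fun i => if F (Fin.cast hL.symm i) ∈ 𝒥 then 1 else 0)
        (fun i => if F i ∈ 𝒥 then 1 else 0) (fun i => rfl)).symm
    have step2 : ∑ i : Fin (lh + 1), (if F (Fin.cast hL.symm i) ∈ 𝒥 then 1 else 0)
        = ∑ i : Fin (lh + 1), (if F' (τ i) ∈ 𝒥 then 1 else 0) :=
      Finset.sum_congr rfl (fun i _ => if_congr (assoc_mem_J hsc (hm2 i)) rfl rfl)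
    have step3 : ∑ i : Fin (lh + 1), (if F' (τ i) ∈ 𝒥 then 1 else 0)
        = Jcnt 𝒜 F' := by
      unfold Jcnt
      exact Equiv.sum_comp τ (fun i => if F' i ∈ 𝒥 then 1 else 0)
    rw [← step3, ← step2, ← step1, hFcnt]
  have hcntHf : Jcnt 𝒜 Hf = cmax := by
    have : Jcnt 𝒜 F' = Jcnt 𝒜 Hf + Jcnt 𝒜 (fun _ : Fin 1 => f) := by
      rw [hF']
      unfold Jcnt
      rw [Fin.sum_univ_add]
      congr 1
      · exact Finset.sum_congr rfl (fun i _ => by rw [Fin.append_left])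
      · exact Finset.sum_congr rfl (fun i _ => by rw [Fin.append_right])
    have hzero : Jcnt 𝒜 (fun _ : Fin 1 => f) = 0 := by
      unfold Jcnt
      simp [hfJ]
    rw [hcntF', hzero, add_zero] at this
    exact this.symm
  exact IH lh (by omega) j Hf hjJ hj0 hHf hHfp hcntHf

end Machine

/-- **Corollary 3.7**: a Noetherian unique factorization superdomain is local with
unique maximal ideal the canonical superideal `𝒥`, and `𝒥` is nilpotent. -/
theorem noetherian_ufsr_superdomain_local_and_J_nilpotent
    {R : Type*} [Ring R] [Nontrivial R]
    (𝒜 : ZMod 2 → AddSubgroup R) [GradedRing 𝒜]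
    (hsc : SuperComm 𝒜) (h2 : TwoRegular R) (hodd : 𝒜 1 ≠ ⊥)
    (hON : IsOddlyNoetherian 𝒜) (hNoeth : IsNoetherianRing (evenSubring 𝒜))
    (hdom : IsSuperdomain 𝒜) (hufsr : IsUFSR R) :
    (∀ x : R, IsUnit x ↔ x ∉ canonicalSuperideal 𝒜) ∧
      ∃ m : ℕ, ∀ x : Fin m → R, (∀ i, x i ∈ canonicalSuperideal 𝒜) →
        (List.ofFn x).prod = 0 := by
  obtain ⟨n, z, hz, hgen⟩ := hON
  constructor
  · intro x
    constructor
    · intro hu hxJ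
      exact not_unit_mem_J hdom.1 hxJ hu
    · intro hxJ
      by_contra hxu
      have hx0 : x ≠ 0 := fun h => hxJ (h ▸ Submodule.zero_mem _)
      obtain ⟨d, F, hF, hFp⟩ := hufsr.1 x hx0 hxu
      have hex : ∃ i, F i ∉ canonicalSuperideal 𝒜 := by
        by_contra hall
        push_neg at hall
        cases d with
        | zero =>
          apply hxu
          rw [hFp]
          simp
        | succ d' =>
          apply hxJ
          rw [hFp, List.ofFn_succ, List.prod_cons]
          exact J_mul_right hsc (hall 0) _
      obtain ⟨i, hiJ⟩ := hex
      exact no_normal_irreducible_outside_J hsc h2 hdom hufsr hz hgen hodd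
        (hF i).1 (hF i).2 hiJ
  · exact ⟨n + 1, fun x hx => Jprod_zero hsc h2 hz hgen (Nat.lt_succ_self n) x hx⟩
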